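/- arXiv:1812.03961 — 3 statements merged into one kernel-verified Lean document; each statement's English description precedes it below -/
import Mathlib

section
/- Let n ≥ 3, τ > 0 and C₀ > 0. Let σ be a C¹ map from {x ∈ ℝⁿ : |x| ≥ 1} to symmetric n×n real matrices satisfying ‖σ(x)‖ ≤ C₀ |x|^{−τ} for all |x| ≥ 1, and set g(x) = I + σ(x) (so g_{ij}(x) = δ_{ij} + σ_{ij}(x)). Let K(y) = y/|y|² be the Kelvin transform, whose partial derivatives are ∂_i K^k(y) = δ_{ik}|y|^{−2} − 2 y_i y_k |y|^{−4}. For 0 < |y| ≤ 1 define the pulled-back metric components h_{ij}(y) = Σ_{k,l} ∂_i K^k(y) · ∂_j K^l(y) · g_{kl}(K(y)). Then there exists a constant C > 0 such that for all y with 0 < |y| ≤ 1 and all indices i, j one has |h_{ij}(y) − |y|^{−4} δ_{ij}| ≤ C |y|^{τ−4}. -/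
open scoped BigOperators

/-- The Kelvin transform `K(y) = y / |y|²` on `ℝⁿ \ {0}`. -/
noncomputable def kelvin (n : ℕ) (y : EuclideanSpace ℝ (Fin n)) : EuclideanSpace ℝ (Fin n) :=
  (‖y‖ ^ 2)⁻¹ • y

/-- The partial derivatives of the Kelvin transform:
`∂_i K^k (y) = δ_{ik} |y|^{-2} - 2 y_i y_k |y|^{-4}`. -/
noncomputable def dKelvin (n : ℕ) (y : EuclideanSpace ℝ (Fin n)) (i k : Fin n) : ℝ :=
  (if i = k then (1 : ℝ) else 0) * ‖y‖ ^ (-(2 : ℝ)) - 2 * y i * y k * ‖y‖ ^ (-(4 : ℝ))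

/-- The components of the pulled-back metric
`h_{ij}(y) = Σ_{k,l} ∂_i K^k(y) ∂_j K^l(y) g_{kl}(K(y))`, where
`g_{kl}(x) = δ_{kl} + σ_{kl}(x)`. -/
noncomputable def pulledMetric (n : ℕ) (σ : EuclideanSpace ℝ (Fin n) → Fin n → Fin n → ℝ)
    (y : EuclideanSpace ℝ (Fin n)) (i j : Fin n) : ℝ :=
  ∑ k, ∑ l, dKelvin n y i k * dKelvin n y j l *
    ((if k = l then (1 : ℝ) else 0) + σ (kelvin n y) k l)


/-!
The Kelvin transform is conformal: `∂_i K^k(y) = |y|⁻² (δ_{ik} - 2 ŷ_i ŷ_k)` is `|y|⁻²` times a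
Householder reflection, so the Euclidean part `δ` of `g` pulls back to exactly `|y|⁻⁴ δ`. The
remainder `Σ_{k,l} ∂_i K^k ∂_j K^l σ_{kl}(K y)` has `n²` terms, each at most `(3|y|⁻²)²` times
`C₀ |K y|^{-τ} = C₀ |y|^τ`, because `|K y| = |y|⁻¹ ≥ 1`.
-/

open Finset

theorem sum_householder_mul_householder {ι : Type*} [Fintype ι] [DecidableEq ι] (v : ι → ℝ)
    {a b : ℝ} (hab : (∑ k, v k ^ 2) * b = a) (i j : ι) :
    ∑ k, ((if i = k then (1 : ℝ) else 0) * a - 2 * v i * v k * b) *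
        ((if j = k then (1 : ℝ) else 0) * a - 2 * v j * v k * b) =
      a ^ 2 * (if i = j then (1 : ℝ) else 0) := by
  have expand : ∀ k, ((if i = k then (1 : ℝ) else 0) * a - 2 * v i * v k * b) *
        ((if j = k then (1 : ℝ) else 0) * a - 2 * v j * v k * b) =
      (if i = k then (1 : ℝ) else 0) *
          ((if j = k then (1 : ℝ) else 0) * a ^ 2 - 2 * v j * v k * a * b)
        - (if j = k then (1 : ℝ) else 0) * (2 * v i * v k * a * b)
        + v k ^ 2 * (4 * v i * v j * b ^ 2) := fun k => by ring
  rw [sum_congr rfl fun k _ => expand k]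
  simp only [sum_add_distrib, sum_sub_distrib, ← sum_mul, ite_mul, one_mul, zero_mul,
    sum_ite_eq, mem_univ, if_true]
  rcases eq_or_ne i j with rfl | hij
  · simp only [if_true]
    linear_combination (4 * v i * v i * b) * hab
  · simp only [hij, hij.symm, if_false]
    linear_combination (4 * v i * v j * b) * hab

theorem abs_sum_sum_le_card_sq_mul {ι : Type*} [Fintype ι] (f : ι → ι → ℝ) {M : ℝ}
    (h : ∀ k l, |f k l| ≤ M) : |∑ k, ∑ l, f k l| ≤ Fintype.card ι ^ 2 * M := by
  calc |∑ k, ∑ l, f k l| ≤ ∑ k, ∑ l, |f k l| :=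
        (abs_sum_le_sum_abs _ _).trans (sum_le_sum fun k _ => abs_sum_le_sum_abs _ _)
    _ ≤ ∑ _k : ι, ∑ _l : ι, M := sum_le_sum fun k _ => sum_le_sum fun l _ => h k l
    _ = Fintype.card ι ^ 2 * M := by simp only [sum_const, card_univ, nsmul_eq_mul]; ring

theorem abs_apply_apply_le_norm {ι κ : Type*} [Fintype ι] [Fintype κ] (A : ι → κ → ℝ)
    (k : ι) (l : κ) : |A k l| ≤ ‖A‖ :=
  (norm_le_pi_norm (A k) l).trans (norm_le_pi_norm A k)

theorem norm_kelvin (n : ℕ) (y : EuclideanSpace ℝ (Fin n)) : ‖kelvin n y‖ = ‖y‖⁻¹ := by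
  rw [kelvin, norm_smul, norm_inv, norm_pow, norm_norm, sq, mul_inv, mul_assoc]
  rcases eq_or_ne ‖y‖ 0 with h | h
  · simp [h]
  · rw [inv_mul_cancel₀ h, mul_one]

theorem norm_kelvin_rpow_neg (n : ℕ) (y : EuclideanSpace ℝ (Fin n)) (τ : ℝ) :
    ‖kelvin n y‖ ^ (-τ) = ‖y‖ ^ τ := by
  rw [norm_kelvin, Real.inv_rpow (norm_nonneg _), Real.rpow_neg (norm_nonneg _), inv_inv]

theorem rpow_neg_two_sq {r : ℝ} (hr : 0 ≤ r) : (r ^ (-(2 : ℝ))) ^ 2 = r ^ (-(4 : ℝ)) := by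
  rw [← Real.rpow_natCast, ← Real.rpow_mul hr]; norm_num

theorem sq_mul_rpow_neg_four {r : ℝ} (hr : 0 ≤ r) : r ^ 2 * r ^ (-(4 : ℝ)) = r ^ (-(2 : ℝ)) := by
  rw [← Real.rpow_natCast, ← Real.rpow_add' hr (by norm_num)]; norm_num

theorem sum_dKelvin_mul_dKelvin (n : ℕ) (y : EuclideanSpace ℝ (Fin n)) (i j : Fin n) :
    ∑ k, dKelvin n y i k * dKelvin n y j k =
      ‖y‖ ^ (-(4 : ℝ)) * (if i = j then (1 : ℝ) else 0) := by
  rw [← rpow_neg_two_sq (norm_nonneg y)]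
  refine sum_householder_mul_householder _ ?_ i j
  rw [← EuclideanSpace.real_norm_sq_eq, sq_mul_rpow_neg_four (norm_nonneg y)]

theorem abs_dKelvin_le (n : ℕ) (y : EuclideanSpace ℝ (Fin n)) (i k : Fin n) :
    |dKelvin n y i k| ≤ 3 * ‖y‖ ^ (-(2 : ℝ)) := by
  have hr := norm_nonneg y
  have ha : 0 ≤ ‖y‖ ^ (-(2 : ℝ)) := Real.rpow_nonneg hr _
  have hb : 0 ≤ ‖y‖ ^ (-(4 : ℝ)) := Real.rpow_nonneg hr _
  have hδ : |(if i = k then (1 : ℝ) else 0) * ‖y‖ ^ (-(2 : ℝ))| ≤ ‖y‖ ^ (-(2 : ℝ)) := by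
    rw [abs_mul, abs_of_nonneg ha]
    exact mul_le_of_le_one_left ha (by split_ifs <;> simp)
  have hyy : |y i| * |y k| ≤ ‖y‖ ^ 2 := by
    rw [sq]; exact mul_le_mul (PiLp.norm_apply_le y i) (PiLp.norm_apply_le y k) (abs_nonneg _) hr
  have hcross : |2 * y i * y k * ‖y‖ ^ (-(4 : ℝ))| ≤ 2 * ‖y‖ ^ (-(2 : ℝ)) := by
    rw [← sq_mul_rpow_neg_four hr, abs_mul, abs_mul, abs_mul, abs_two, abs_of_nonneg hb]
    nlinarith
  calc |dKelvin n y i k| ≤ _ := abs_sub _ _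
    _ ≤ 3 * ‖y‖ ^ (-(2 : ℝ)) := by linarith

theorem pulledMetric_sub_eq (n : ℕ) (σ : EuclideanSpace ℝ (Fin n) → Fin n → Fin n → ℝ)
    (y : EuclideanSpace ℝ (Fin n)) (i j : Fin n) :
    pulledMetric n σ y i j - ‖y‖ ^ (-(4 : ℝ)) * (if i = j then (1 : ℝ) else 0) =
      ∑ k, ∑ l, dKelvin n y i k * dKelvin n y j l * σ (kelvin n y) k l := by
  simp only [pulledMetric, mul_add, sum_add_distrib, mul_ite, mul_one, mul_zero, sum_ite_eq,
    mem_univ, if_true, sum_dKelvin_mul_dKelvin, add_sub_cancel_left]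

theorem abs_pulledMetric_sub_le (n : ℕ) (σ : EuclideanSpace ℝ (Fin n) → Fin n → Fin n → ℝ)
    (y : EuclideanSpace ℝ (Fin n)) {M : ℝ} (hM : ∀ k l, |σ (kelvin n y) k l| ≤ M) (i j : Fin n) :
    |pulledMetric n σ y i j - ‖y‖ ^ (-(4 : ℝ)) * (if i = j then (1 : ℝ) else 0)| ≤
      9 * n ^ 2 * M * ‖y‖ ^ (-(4 : ℝ)) := by
  rw [pulledMetric_sub_eq, ← rpow_neg_two_sq (norm_nonneg y)]
  refine (abs_sum_sum_le_card_sq_mul _ (M := 9 * M * (‖y‖ ^ (-(2 : ℝ))) ^ 2)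
    fun k l => ?_).trans_eq (by rw [Fintype.card_fin]; ring)
  have hM0 : 0 ≤ M := (abs_nonneg _).trans (hM k l)
  rw [abs_mul, abs_mul]
  calc _ ≤ 3 * ‖y‖ ^ (-(2 : ℝ)) * (3 * ‖y‖ ^ (-(2 : ℝ))) * M :=
        mul_le_mul (mul_le_mul (abs_dKelvin_le n y i k) (abs_dKelvin_le n y j l)
          (abs_nonneg _) (by positivity)) (hM k l) (abs_nonneg _) (by positivity)
    _ = _ := by ring

theorem kelvin_pulled_metric_estimate_general (n : ℕ) (hn : 3 ≤ n) (τ C₀ : ℝ)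
    (hC₀ : 0 < C₀) (σ : EuclideanSpace ℝ (Fin n) → Fin n → Fin n → ℝ)
    (hσbd : ∀ x : EuclideanSpace ℝ (Fin n), 1 ≤ ‖x‖ → ‖σ x‖ ≤ C₀ * ‖x‖ ^ (-τ)) :
    ∃ C > 0, ∀ y : EuclideanSpace ℝ (Fin n), 0 < ‖y‖ → ‖y‖ ≤ 1 → ∀ i j : Fin n,
      |pulledMetric n σ y i j - ‖y‖ ^ (-(4 : ℝ)) * (if i = j then (1 : ℝ) else 0)|
        ≤ C * ‖y‖ ^ (τ - 4) := by
  have hn0 : (0 : ℝ) < n := Nat.cast_pos.mpr (by omega)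
  refine ⟨9 * n ^ 2 * C₀, by positivity, fun y hy hy1 i j => ?_⟩
  have hK : 1 ≤ ‖kelvin n y‖ := by rw [norm_kelvin]; exact (one_le_inv₀ hy).mpr hy1
  have hσK : ∀ k l, |σ (kelvin n y) k l| ≤ C₀ * ‖y‖ ^ τ := fun k l =>
    (abs_apply_apply_le_norm _ k l).trans
      ((hσbd _ hK).trans_eq (by rw [norm_kelvin_rpow_neg]))
  calc _ ≤ 9 * n ^ 2 * (C₀ * ‖y‖ ^ τ) * ‖y‖ ^ (-(4 : ℝ)) :=
        abs_pulledMetric_sub_le n σ y hσK i j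
    _ = 9 * n ^ 2 * C₀ * ‖y‖ ^ (τ - 4) := by
      rw [sub_eq_add_neg, Real.rpow_add hy]; ring

/-- if `σ` is a `C¹` symmetric-matrix-valued map on `{|x| ≥ 1}` with
`‖σ(x)‖ ≤ C₀ |x|^{-τ}`, then the pulled-back metric components satisfy
`|h_{ij}(y) - |y|^{-4} δ_{ij}| ≤ C |y|^{τ-4}` on the punctured unit ball. -/
theorem kelvin_pulled_metric_estimate (n : ℕ) (hn : 3 ≤ n) (τ C₀ : ℝ) (hτ : 0 < τ)
    (hC₀ : 0 < C₀) (σ : EuclideanSpace ℝ (Fin n) → Fin n → Fin n → ℝ)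
    (hσC1 : ContDiffOn ℝ 1 σ {x : EuclideanSpace ℝ (Fin n) | 1 ≤ ‖x‖})
    (hσsymm : ∀ x : EuclideanSpace ℝ (Fin n), 1 ≤ ‖x‖ → ∀ i j, σ x i j = σ x j i)
    (hσbd : ∀ x : EuclideanSpace ℝ (Fin n), 1 ≤ ‖x‖ → ‖σ x‖ ≤ C₀ * ‖x‖ ^ (-τ)) :
    ∃ C > 0, ∀ y : EuclideanSpace ℝ (Fin n), 0 < ‖y‖ → ‖y‖ ≤ 1 → ∀ i j : Fin n,
      |pulledMetric n σ y i j - ‖y‖ ^ (-(4 : ℝ)) * (if i = j then (1 : ℝ) else 0)|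
        ≤ C * ‖y‖ ^ (τ - 4) :=
  kelvin_pulled_metric_estimate_general n hn τ C₀ hC₀ σ hσbd
end

section
/- Let n ≥ 3, κ > n and C₀ > 0, and let f : ℝⁿ → ℝ be a measurable function satisfying |f(y)| ≤ C₀ |y|^{−κ} for all y ≠ 0. Then there exists a constant C > 0 such that for every x ∈ ℝⁿ with r := |x| ≥ 1, the integral of |x − y|^{2−n} |f(y)| over the region B_r(x) \ B_r(0) = {y ∈ ℝⁿ : |y − x| < r and |y| ≥ r} is at most C r^{2−κ}. -/
open MeasureTheory Metric Module

/-! On the region, `‖y‖ ≥ ‖x‖ = r`, so `|f y| ≤ C₀ r^{-κ}` and the integral is at most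
`C₀ r^{-κ} ∫_{B_r(x)} ‖x - y‖^{2-n} dy`. By translation and scaling this last integral is
`r² ∫_{B_1(0)} ‖z‖^{2-n} dz`, which is finite since `2 - n > -n`. -/

theorem setLIntegral_norm_sub_rpow_mul_le_of_norm_le_rpow {E : Type*} [NormedAddCommGroup E]
    [MeasurableSpace E] [OpensMeasurableSpace E] {μ : Measure E} {f : E → ℝ} {C₀ κ p : ℝ}
    (hC₀ : 0 ≤ C₀) (hκ : 0 ≤ κ) (hfbd : ∀ y, y ≠ 0 → |f y| ≤ C₀ * ‖y‖ ^ (-κ)) {x : E}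
    (hx : x ≠ 0) :
    ∫⁻ y in {y | dist y x < ‖x‖ ∧ ‖x‖ ≤ ‖y‖}, ENNReal.ofReal (‖x - y‖ ^ p * |f y|) ∂μ
      ≤ (∫⁻ y in ball x ‖x‖, ENNReal.ofReal (‖x - y‖ ^ p) ∂μ) *
          ENNReal.ofReal (C₀ * ‖x‖ ^ (-κ)) := by
  rw [← lintegral_mul_const' _ _ ENNReal.ofReal_ne_top]
  refine (setLIntegral_mono ((continuous_const.sub continuous_id).norm.measurable.pow_const p
    |>.ennreal_ofReal.mul_const _) fun y hy => ?_).trans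
    (lintegral_mono_set fun y hy => hy.1)
  have hy0 : y ≠ 0 := by
    rintro rfl
    exact (norm_pos_iff.2 hx).not_ge (by simpa using hy.2)
  have hfy : |f y| ≤ C₀ * ‖x‖ ^ (-κ) :=
    (hfbd y hy0).trans <| mul_le_mul_of_nonneg_left
      (Real.rpow_le_rpow_of_nonpos (norm_pos_iff.2 hx) hy.2 (neg_nonpos.2 hκ)) hC₀
  rw [← ENNReal.ofReal_mul (by positivity)]
  exact ENNReal.ofReal_le_ofReal (mul_le_mul_of_nonneg_left hfy (by positivity))

section NormRpow

variable {E : Type*} [NormedAddCommGroup E] [NormedSpace ℝ E] [FiniteDimensional ℝ E]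
  [MeasurableSpace E] [BorelSpace E] (μ : Measure E) [μ.IsAddHaarMeasure]

theorem integrableOn_ball_norm_rpow (hd : 1 ≤ finrank ℝ E) {p : ℝ}
    (hp : -(finrank ℝ E : ℝ) < p) (r : ℝ) :
    IntegrableOn (fun z : E => ‖z‖ ^ p) (ball 0 r) μ := by
  refine integrableOn_ball_of_norm_le_rpow hd (C := 1) (α := -p) (by linarith) ?_
    (measurable_norm.pow_const p).aestronglyMeasurable
  filter_upwards with z
  simp [abs_of_nonneg (Real.rpow_nonneg (norm_nonneg z) p)]

theorem setIntegral_ball_norm_rpow {r : ℝ} (hr : 0 < r) (p : ℝ) :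
    ∫ z in ball 0 r, ‖z‖ ^ p ∂μ = r ^ (p + finrank ℝ E) * ∫ z in ball (0 : E) 1, ‖z‖ ^ p ∂μ := by
  have h := Measure.setIntegral_comp_smul_of_pos μ (fun z : E => ‖z‖ ^ p) (ball 0 1) hr
  simp only [smul_unitBall hr.ne', Real.norm_of_nonneg hr.le, norm_smul,
    Real.mul_rpow hr.le (norm_nonneg _), integral_const_mul, smul_eq_mul] at h
  rw [Real.rpow_add hr, Real.rpow_natCast, mul_comm (r ^ p), mul_assoc, h,
    mul_inv_cancel_left₀ (by positivity)]

theorem lintegral_ball_norm_sub_rpow (hd : 1 ≤ finrank ℝ E) {p : ℝ}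
    (hp : -(finrank ℝ E : ℝ) < p) (x : E) {r : ℝ} (hr : 0 < r) :
    ∫⁻ y in ball x r, ENNReal.ofReal (‖x - y‖ ^ p) ∂μ
      = ENNReal.ofReal (r ^ (p + finrank ℝ E) * ∫ z in ball (0 : E) 1, ‖z‖ ^ p ∂μ) := by
  have hpre : (fun y => y - x) ⁻¹' ball 0 r = ball x r := by ext y; simp [dist_eq_norm]
  simp_rw [norm_sub_rev x]
  rw [← setIntegral_ball_norm_rpow μ hr, ofReal_integral_eq_lintegral_ofReal
    (integrableOn_ball_norm_rpow μ hd hp r) (ae_of_all _ fun z => by positivity), ← hpre,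
    (measurePreserving_sub_right μ x).setLIntegral_comp_preimage measurableSet_ball
      (measurable_norm.pow_const p).ennreal_ofReal]

end NormRpow

theorem newtonian_potential_near_region_estimate_general (n : ℕ) (hn : 3 ≤ n) (κ C₀ : ℝ)
    (hκ : (n : ℝ) < κ) (hC₀ : 0 < C₀) (f : EuclideanSpace ℝ (Fin n) → ℝ)
    (hfbd : ∀ y : EuclideanSpace ℝ (Fin n), y ≠ 0 → |f y| ≤ C₀ * ‖y‖ ^ (-κ)) :
    ∃ C > 0, ∀ x : EuclideanSpace ℝ (Fin n), 1 ≤ ‖x‖ →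
      (∫⁻ y in {y : EuclideanSpace ℝ (Fin n) | dist y x < ‖x‖ ∧ ‖x‖ ≤ ‖y‖},
          ENNReal.ofReal (‖x - y‖ ^ ((2 : ℝ) - n) * |f y|))
        ≤ ENNReal.ofReal (C * ‖x‖ ^ (2 - κ)) := by
  have hd : 1 ≤ finrank ℝ (EuclideanSpace ℝ (Fin n)) := by
    rw [finrank_euclideanSpace_fin]; omega
  have hp : -(finrank ℝ (EuclideanSpace ℝ (Fin n)) : ℝ) < 2 - n := by simp
  -- `I` is `∫ z in ball 0 1, ‖z‖ ^ (2 - n)`, assigned by the closing `rw`: writing it out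
  -- directly produces a different metric instance path whose unification times out.
  obtain ⟨I, hI, hball⟩ : ∃ I ≥ 0, ∀ x : EuclideanSpace ℝ (Fin n), 0 < ‖x‖ →
      ∫⁻ y in ball x ‖x‖, ENNReal.ofReal (‖x - y‖ ^ ((2 : ℝ) - n)) =
        ENNReal.ofReal (‖x‖ ^ (2 : ℝ) * I) := by
    refine ⟨_, ?_, fun x hx0 => by
      rw [lintegral_ball_norm_sub_rpow volume hd hp x hx0, finrank_euclideanSpace_fin,
        sub_add_cancel]⟩
    exact setIntegral_nonneg measurableSet_ball fun z _ => by positivity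
  refine ⟨C₀ * I + 1, by positivity, fun x hx => ?_⟩
  have hx0 : 0 < ‖x‖ := one_pos.trans_le hx
  calc _ ≤ (∫⁻ y in ball x ‖x‖, ENNReal.ofReal (‖x - y‖ ^ ((2 : ℝ) - n))) *
          ENNReal.ofReal (C₀ * ‖x‖ ^ (-κ)) :=
        setLIntegral_norm_sub_rpow_mul_le_of_norm_le_rpow hC₀.le
          (by linarith [n.cast_nonneg (α := ℝ)]) hfbd (norm_pos_iff.1 hx0)
    _ = ENNReal.ofReal (C₀ * I * ‖x‖ ^ (2 - κ)) := by
        rw [hball x hx0, ← ENNReal.ofReal_mul (by positivity), sub_eq_add_neg,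
          Real.rpow_add hx0]
        ring_nf
    _ ≤ ENNReal.ofReal ((C₀ * I + 1) * ‖x‖ ^ (2 - κ)) := by
        gcongr
        linarith

/-- if `|f(y)| ≤ C₀ |y|^{-κ}` with `κ > n`, then the integral of
`|x-y|^{2-n} |f(y)|` over the region `B_r(x) \ B_r(0) = {y : |y - x| < r, |y| ≥ r}`,
where `r = |x| ≥ 1`, is at most `C r^{2-κ}`. -/
theorem newtonian_potential_near_region_estimate (n : ℕ) (hn : 3 ≤ n) (κ C₀ : ℝ)
    (hκ : (n : ℝ) < κ) (hC₀ : 0 < C₀) (f : EuclideanSpace ℝ (Fin n) → ℝ)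
    (hf : Measurable f)
    (hfbd : ∀ y : EuclideanSpace ℝ (Fin n), y ≠ 0 → |f y| ≤ C₀ * ‖y‖ ^ (-κ)) :
    ∃ C > 0, ∀ x : EuclideanSpace ℝ (Fin n), 1 ≤ ‖x‖ →
      (∫⁻ y in {y : EuclideanSpace ℝ (Fin n) | dist y x < ‖x‖ ∧ ‖x‖ ≤ ‖y‖},
          ENNReal.ofReal (‖x - y‖ ^ ((2 : ℝ) - n) * |f y|))
        ≤ ENNReal.ofReal (C * ‖x‖ ^ (2 - κ)) :=
  newtonian_potential_near_region_estimate_general n hn κ C₀ hκ hC₀ f hfbd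
end

section
/- Let n ≥ 3, κ > n and C₀ > 0, and let f : ℝⁿ → ℝ be a measurable function satisfying |f(y)| ≤ C₀ |y|^{−κ} for all y ≠ 0. Then there exists a constant C > 0 such that for every x ∈ ℝⁿ with r := |x| ≥ 1, the integral of |x − y|^{2−n} |f(y)| over the region ℝⁿ \ (B_r(0) ∪ B_r(x)) = {y ∈ ℝⁿ : |y| ≥ r and |y − x| ≥ r} is at most C r^{2−κ}. -/
/-!
On the far region both `|y| ≥ r` and `|x - y| ≥ r`, so the kernel `|x - y|^{2-n}` is at most
`r^{2-n}` (as `n > 2`) and the integral is bounded by `C₀ r^{2-n}` times the tail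
`∫_{|y| ≥ r} |y|^{-κ}`. Scaling `y = r z` turns this tail into `r^{n-κ}` times the tail at
radius `1`, which is finite because `κ > n`.
-/

open MeasureTheory Set ENNReal Module

section

variable {E : Type*} [NormedAddCommGroup E] [NormedSpace ℝ E] [FiniteDimensional ℝ E]
  [MeasurableSpace E] [BorelSpace E] (μ : Measure E) [μ.IsAddHaarMeasure]

theorem lintegral_eq_pow_finrank_mul_lintegral_comp_smul {f : E → ℝ≥0∞} (hf : Measurable f)
    {R : ℝ} (hR : 0 < R) :
    ∫⁻ x, f x ∂μ = ENNReal.ofReal (R ^ finrank ℝ E) * ∫⁻ x, f (R • x) ∂μ := by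
  rw [← lintegral_map hf (measurable_const_smul R), Measure.map_addHaar_smul μ hR.ne',
    lintegral_smul_measure, smul_eq_mul, ← mul_assoc, ← ENNReal.ofReal_mul (by positivity),
    abs_of_pos (by positivity), mul_inv_cancel₀ (by positivity), ofReal_one, one_mul]

theorem setLIntegral_norm_rpow_neg_tail_eq {r : ℝ} (hr : 0 < r) (κ : ℝ) :
    ∫⁻ y in {y : E | r ≤ ‖y‖}, ENNReal.ofReal (‖y‖ ^ (-κ)) ∂μ =
      ENNReal.ofReal (r ^ ((finrank ℝ E : ℝ) - κ)) *
        ∫⁻ z in {z : E | 1 ≤ ‖z‖}, ENNReal.ofReal (‖z‖ ^ (-κ)) ∂μ := by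
  have hmeas (t : ℝ) : MeasurableSet {y : E | t ≤ ‖y‖} :=
    measurableSet_le measurable_const measurable_norm
  have hscale (z : E) :
      {y : E | r ≤ ‖y‖}.indicator (fun y ↦ ENNReal.ofReal (‖y‖ ^ (-κ))) (r • z) =
        ENNReal.ofReal (r ^ (-κ)) *
          {z : E | 1 ≤ ‖z‖}.indicator (fun z ↦ ENNReal.ofReal (‖z‖ ^ (-κ))) z := by
    simp only [indicator, mem_ofPred_eq, norm_smul, Real.norm_of_nonneg hr.le,
      le_mul_iff_one_le_right hr]
    split_ifs
    · rw [Real.mul_rpow hr.le (norm_nonneg z), ENNReal.ofReal_mul (by positivity)]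
    · rw [mul_zero]
  rw [← lintegral_indicator (hmeas r), ← lintegral_indicator (hmeas 1),
    lintegral_eq_pow_finrank_mul_lintegral_comp_smul μ
      ((measurable_norm.pow_const _).ennreal_ofReal.indicator (hmeas r)) hr]
  simp only [hscale, lintegral_const_mul' _ _ ofReal_ne_top, ← mul_assoc,
    ← ENNReal.ofReal_mul (by positivity : (0 : ℝ) ≤ r ^ finrank ℝ E)]
  rw [← Real.rpow_natCast, ← Real.rpow_add hr, sub_eq_add_neg]

theorem setLIntegral_norm_rpow_neg_tail_one_lt_top {κ : ℝ} (hκ : (finrank ℝ E : ℝ) < κ) :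
    ∫⁻ z in {z : E | 1 ≤ ‖z‖}, ENNReal.ofReal (‖z‖ ^ (-κ)) ∂μ < ∞ := by
  have hκ0 : 0 < κ := (Nat.cast_nonneg _).trans_lt hκ
  have hle : ∀ z ∈ {z : E | 1 ≤ ‖z‖}, ENNReal.ofReal (‖z‖ ^ (-κ)) ≤
      ENNReal.ofReal (2 ^ κ) * ENNReal.ofReal ((1 + ‖z‖) ^ (-κ)) := by
    intro z (hz : 1 ≤ ‖z‖)
    rw [← ENNReal.ofReal_mul (by positivity)]
    refine ENNReal.ofReal_le_ofReal ?_
    calc ‖z‖ ^ (-κ) = 2 ^ κ * (2 * ‖z‖) ^ (-κ) := by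
          rw [Real.mul_rpow (by norm_num) (norm_nonneg z), ← mul_assoc,
            ← Real.rpow_add (by norm_num), add_neg_cancel, Real.rpow_zero, one_mul]
      _ ≤ 2 ^ κ * (1 + ‖z‖) ^ (-κ) := by
          gcongr 2 ^ κ * ?_
          exact Real.rpow_le_rpow_of_nonpos (by positivity) (by linarith) (by linarith)
  calc ∫⁻ z in {z : E | 1 ≤ ‖z‖}, ENNReal.ofReal (‖z‖ ^ (-κ)) ∂μ
      ≤ ∫⁻ z in {z : E | 1 ≤ ‖z‖},
          ENNReal.ofReal (2 ^ κ) * ENNReal.ofReal ((1 + ‖z‖) ^ (-κ)) ∂μ :=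
        setLIntegral_mono (by fun_prop) hle
    _ ≤ ∫⁻ z, ENNReal.ofReal (2 ^ κ) * ENNReal.ofReal ((1 + ‖z‖) ^ (-κ)) ∂μ :=
        setLIntegral_le_lintegral _ _
    _ = ENNReal.ofReal (2 ^ κ) * ∫⁻ z, ENNReal.ofReal ((1 + ‖z‖) ^ (-κ)) ∂μ :=
        lintegral_const_mul' _ _ ofReal_ne_top
    _ < ∞ := mul_lt_top ofReal_lt_top (finite_integral_one_add_norm hκ)

theorem exists_setLIntegral_norm_rpow_neg_tail_le {κ : ℝ} (hκ : (finrank ℝ E : ℝ) < κ) :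
    ∃ C > 0, ∀ r > 0, ∫⁻ y in {y : E | r ≤ ‖y‖}, ENNReal.ofReal (‖y‖ ^ (-κ)) ∂μ ≤
      ENNReal.ofReal (C * r ^ ((finrank ℝ E : ℝ) - κ)) := by
  set J := ∫⁻ z in {z : E | 1 ≤ ‖z‖}, ENNReal.ofReal (‖z‖ ^ (-κ)) ∂μ
  refine ⟨J.toReal + 1, by positivity, fun r hr ↦ ?_⟩
  calc _ = ENNReal.ofReal (r ^ ((finrank ℝ E : ℝ) - κ)) * ENNReal.ofReal J.toReal := by
        rw [setLIntegral_norm_rpow_neg_tail_eq μ hr,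
          ofReal_toReal (setLIntegral_norm_rpow_neg_tail_one_lt_top μ hκ).ne]
    _ ≤ ENNReal.ofReal (r ^ ((finrank ℝ E : ℝ) - κ)) * ENNReal.ofReal (J.toReal + 1) := by
        gcongr; linarith
    _ = _ := by rw [← ENNReal.ofReal_mul (by positivity), mul_comm]

end

theorem setLIntegral_far_region_le {E : Type*} [NormedAddCommGroup E] [MeasurableSpace E]
    [OpensMeasurableSpace E] (μ : Measure E) {p κ C₀ : ℝ} (hp : p ≤ 0) (hC₀ : 0 ≤ C₀) {f : E → ℝ}
    (hfbd : ∀ y, y ≠ 0 → |f y| ≤ C₀ * ‖y‖ ^ (-κ)) {x : E} (hx : 0 < ‖x‖) :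
    ∫⁻ y in {y : E | ‖x‖ ≤ ‖y‖ ∧ ‖x‖ ≤ dist y x}, ENNReal.ofReal (‖x - y‖ ^ p * |f y|) ∂μ ≤
      ENNReal.ofReal (‖x‖ ^ p * C₀) *
        ∫⁻ y in {y : E | ‖x‖ ≤ ‖y‖}, ENNReal.ofReal (‖y‖ ^ (-κ)) ∂μ := by
  have hkernel : ∀ y ∈ {y : E | ‖x‖ ≤ ‖y‖ ∧ ‖x‖ ≤ dist y x},
      ENNReal.ofReal (‖x - y‖ ^ p * |f y|) ≤
        ENNReal.ofReal (‖x‖ ^ p * C₀) * ENNReal.ofReal (‖y‖ ^ (-κ)) := by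
    rintro y ⟨hy, hyx⟩
    rw [← ENNReal.ofReal_mul (by positivity), mul_assoc]
    refine ENNReal.ofReal_le_ofReal (mul_le_mul ?_ (hfbd y ?_) (abs_nonneg _) (by positivity))
    · exact Real.rpow_le_rpow_of_nonpos hx (by rwa [← dist_eq_norm, dist_comm]) hp
    · exact norm_pos_iff.mp (hx.trans_le hy)
  calc _ ≤ ∫⁻ y in {y : E | ‖x‖ ≤ ‖y‖ ∧ ‖x‖ ≤ dist y x},
          ENNReal.ofReal (‖x‖ ^ p * C₀) * ENNReal.ofReal (‖y‖ ^ (-κ)) ∂μ :=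
        setLIntegral_mono (by fun_prop) hkernel
    _ ≤ ∫⁻ y in {y : E | ‖x‖ ≤ ‖y‖},
          ENNReal.ofReal (‖x‖ ^ p * C₀) * ENNReal.ofReal (‖y‖ ^ (-κ)) ∂μ :=
        lintegral_mono_set fun y hy ↦ hy.1
    _ = _ := lintegral_const_mul' _ _ ofReal_ne_top

theorem newtonian_potential_far_region_estimate_general (n : ℕ) (hn : 3 ≤ n) (κ C₀ : ℝ)
    (hκ : (n : ℝ) < κ) (hC₀ : 0 < C₀) (f : EuclideanSpace ℝ (Fin n) → ℝ)
    (hfbd : ∀ y : EuclideanSpace ℝ (Fin n), y ≠ 0 → |f y| ≤ C₀ * ‖y‖ ^ (-κ)) :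
    ∃ C > 0, ∀ x : EuclideanSpace ℝ (Fin n), 1 ≤ ‖x‖ →
      (∫⁻ y in {y : EuclideanSpace ℝ (Fin n) | ‖x‖ ≤ ‖y‖ ∧ ‖x‖ ≤ dist y x},
          ENNReal.ofReal (‖x - y‖ ^ ((2 : ℝ) - n) * |f y|))
        ≤ ENNReal.ofReal (C * ‖x‖ ^ (2 - κ)) := by
  obtain ⟨C, hC, htail⟩ := exists_setLIntegral_norm_rpow_neg_tail_le
    (volume : Measure (EuclideanSpace ℝ (Fin n))) (by rwa [finrank_euclideanSpace_fin])
  rw [finrank_euclideanSpace_fin] at htail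
  refine ⟨C₀ * C, by positivity, fun x hx ↦ ?_⟩
  have hr : 0 < ‖x‖ := one_pos.trans_le hx
  have hn3 : (3 : ℝ) ≤ n := by exact_mod_cast hn
  calc _ ≤ ENNReal.ofReal (‖x‖ ^ ((2 : ℝ) - n) * C₀) *
          ∫⁻ y in {y : EuclideanSpace ℝ (Fin n) | ‖x‖ ≤ ‖y‖}, ENNReal.ofReal (‖y‖ ^ (-κ)) :=
        setLIntegral_far_region_le volume (by linarith) hC₀.le hfbd hr
    _ ≤ ENNReal.ofReal (‖x‖ ^ ((2 : ℝ) - n) * C₀) *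
          ENNReal.ofReal (C * ‖x‖ ^ ((n : ℝ) - κ)) := by
        gcongr
        exact htail _ hr
    _ = ENNReal.ofReal (C₀ * C * ‖x‖ ^ (2 - κ)) := by
        rw [← ENNReal.ofReal_mul (by positivity), show (2 : ℝ) - κ = (2 - n) + (n - κ) by ring,
          Real.rpow_add hr]
        ring_nf

/-- if `|f(y)| ≤ C₀ |y|^{-κ}` with `κ > n`, then the integral of
`|x-y|^{2-n} |f(y)|` over the region `ℝⁿ \ (B_r(0) ∪ B_r(x)) = {y : |y| ≥ r, |y - x| ≥ r}`,
where `r = |x| ≥ 1`, is at most `C r^{2-κ}`. -/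
theorem newtonian_potential_far_region_estimate (n : ℕ) (hn : 3 ≤ n) (κ C₀ : ℝ)
    (hκ : (n : ℝ) < κ) (hC₀ : 0 < C₀) (f : EuclideanSpace ℝ (Fin n) → ℝ)
    (hf : Measurable f)
    (hfbd : ∀ y : EuclideanSpace ℝ (Fin n), y ≠ 0 → |f y| ≤ C₀ * ‖y‖ ^ (-κ)) :
    ∃ C > 0, ∀ x : EuclideanSpace ℝ (Fin n), 1 ≤ ‖x‖ →
      (∫⁻ y in {y : EuclideanSpace ℝ (Fin n) | ‖x‖ ≤ ‖y‖ ∧ ‖x‖ ≤ dist y x},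
          ENNReal.ofReal (‖x - y‖ ^ ((2 : ℝ) - n) * |f y|))
        ≤ ENNReal.ofReal (C * ‖x‖ ^ (2 - κ)) :=
  newtonian_potential_far_region_estimate_general n hn κ C₀ hκ hC₀ f hfbd
end
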